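/- arXiv:2510.23285 — 6 statements merged into one kernel-verified Lean document; each statement's English description precedes it below -/
import Mathlib

section
/- Fix d ∈ ℕ, t ≥ 0, Δt > 0, constants L₀, L₁, L₂, ε ≥ 0 and B > 0, and let F, G : ℝ^d × ℝ → ℝ^d satisfy the drift assumptions. Define the exact backward-flow map Φ : ℝ^d → ℝ^d by Φ(z) = x(t), where x : [t, t+Δt] → ℝ^d solves x'(s) = −G(x(s), s) with terminal condition x(t+Δt) = z, and define the one-step frozen-drift map Ψ(z) = z + Δt·F(z, t+Δt). Let p and q be Borel probability measures on ℝ^d (the true and the generated distribution at noise level t+Δt), and assume that supp p, supp q, every exact trajectory {x(s) : s ∈ [t, t+Δt]} started from supp p, and the images Φ(supp p) and Ψ(supp q) are all contained in the closed ball of radius B/2 centered at the origin. Then W₁(Ψ_* q, Φ_* p) ≤ B·TV(q, p) + e^{L₂Δt}·(Δt·(L₂L₁ + L₀) + ε)·Δt. -/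
open MeasureTheory

noncomputable section

/-- Total variation distance between two measures:
`TV(μ, ν) = sup over Borel sets A of |μ(A) − ν(A)|`. -/
def tvDist {E : Type*} [MeasurableSpace E] (μ ν : Measure E) : ℝ :=
  ⨆ A : {A : Set E // MeasurableSet A}, |(μ A.1).toReal - (ν A.1).toReal|

/-- `π` is a coupling of `μ` and `ν`. -/
def IsCoupling {E : Type*} [MeasurableSpace E] (π : Measure (E × E)) (μ ν : Measure E) : Prop :=
  π.map Prod.fst = μ ∧ π.map Prod.snd = ν

/-- Wasserstein-1 distance: infimum over couplings of `∫ ‖x − y‖ dπ`. -/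
def W1 {E : Type*} [MeasurableSpace E] [NormedAddCommGroup E] (μ ν : Measure E) : ℝ :=
  sInf {r : ℝ | ∃ π : Measure (E × E), IsProbabilityMeasure π ∧ IsCoupling π μ ν ∧
    r = ∫ p, ‖p.1 - p.2‖ ∂π}

/-- The isotropic Gaussian measure `N(m, σ²I_d)` on `ℝ^d`, given by its Lebesgue density. -/
def gaussianE (d : ℕ) (m : EuclideanSpace ℝ (Fin d)) (σ2 : ℝ) :
    Measure (EuclideanSpace ℝ (Fin d)) :=
  volume.withDensity fun x =>
    ENNReal.ofReal ((2 * Real.pi * σ2) ^ (-(d : ℝ) / 2) * Real.exp (-‖x - m‖ ^ 2 / (2 * σ2)))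

/-- Standard Gaussian tail function `Q(r) = P(a ≥ r)` for `a ~ N(0,1)`. -/
def gaussQ (r : ℝ) : ℝ := (ProbabilityTheory.gaussianReal 0 1 (Set.Ici r)).toReal

/-- Standard normal cumulative distribution function `Φ`. -/
def stdCDF (r : ℝ) : ℝ := (ProbabilityTheory.gaussianReal 0 1 (Set.Iic r)).toReal

/-- The (topological) support of a measure: points all of whose neighborhoods
have positive measure. -/
def msupport {E : Type*} [TopologicalSpace E] [MeasurableSpace E] (μ : Measure E) : Set E :=
  {x | ∀ U ∈ nhds x, μ U ≠ 0}

/-! Along the exact trajectory `x` ending at `z`, the true drift `G (x s) s` stays within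
`L₂ (L₁ + ε) Δt + L₀ Δt + ε` of the frozen drift `F z (t + Δt)`: `x` moves at speed at most
`L₁ + ε`, `F` is Lipschitz in space and in time, and `G` is `ε`-close to `F`. Hence
`‖Ψ z - Φ z‖` is at most that quantity times `Δt`, which is below the stated bound because
`1 + x ≤ exp x`.

To pass to the pushforwards, a Hahn decomposition splits `q = q' + ρ` and `p = p' + ρ` with
excesses `q'`, `p'` of equal mass at most `TV(q, p)`. Keeping `ρ` on the diagonal and coupling the
excesses independently gives a coupling of `q` and `p` whose cost is at most the pointwise bound
on the diagonal and at most `B` elsewhere, since `Ψ (supp q)` and `Φ (supp p)` lie in the ball of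
radius `B / 2`. -/

open Set Filter

theorem msupport_eq_support {X : Type*} [TopologicalSpace X] [MeasurableSpace X]
    (μ : Measure X) : msupport μ = μ.support := by
  ext x
  simp only [msupport, mem_ofPred_eq, Measure.mem_support_iff_forall, pos_iff_ne_zero]

theorem ae_mem_msupport {X : Type*} [TopologicalSpace X] [HereditarilyLindelofSpace X]
    [MeasurableSpace X] (μ : Measure X) : ∀ᵐ x ∂μ, x ∈ msupport μ := by
  rw [msupport_eq_support]
  exact Measure.support_mem_ae

section Coupling

variable {α E : Type*} [MeasurableSpace α] [NormedAddCommGroup E] [MeasurableSpace E]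

theorem W1_le_integral {μ ν : Measure E} {π : Measure (E × E)} [IsProbabilityMeasure π]
    (hπ : IsCoupling π μ ν) : W1 μ ν ≤ ∫ z, ‖z.1 - z.2‖ ∂π :=
  csInf_le ⟨0, fun _ ⟨_, _, _, hr⟩ => hr ▸ integral_nonneg fun _ => norm_nonneg _⟩
    ⟨π, ‹_›, hπ, rfl⟩

theorem IsCoupling.isProbabilityMeasure {π : Measure (α × α)} {μ ν : Measure α}
    [IsProbabilityMeasure μ] (hπ : IsCoupling π μ ν) : IsProbabilityMeasure π := by
  constructor
  rw [← preimage_univ (f := Prod.fst), ← Measure.map_apply measurable_fst MeasurableSet.univ,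
    hπ.1, measure_univ]

theorem IsCoupling.map_prodMap {β : Type*} [MeasurableSpace β] {π : Measure (α × α)}
    {μ ν : Measure α} (hπ : IsCoupling π μ ν) {f g : α → β} (hf : Measurable f)
    (hg : Measurable g) :
    IsCoupling (π.map (Prod.map f g)) (μ.map f) (ν.map g) := by
  constructor
  · rw [Measure.map_map measurable_fst (hf.prodMap hg), ← hπ.1,
      Measure.map_map hf measurable_fst]
    rfl
  · rw [Measure.map_map measurable_snd (hf.prodMap hg), ← hπ.2,
      Measure.map_map hg measurable_snd]
    rfl

theorem W1_map_le_integral [BorelSpace E] [SecondCountableTopology E]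
    {π : Measure (α × α)} [IsProbabilityMeasure π] {μ ν : Measure α} (hπ : IsCoupling π μ ν)
    {f g : α → E} (hf : Measurable f) (hg : Measurable g) :
    W1 (μ.map f) (ν.map g) ≤ ∫ z, ‖f z.1 - g z.2‖ ∂π := by
  have hfg := hf.prodMap hg
  have := Measure.isProbabilityMeasure_map (μ := π) hfg.aemeasurable
  calc W1 (μ.map f) (ν.map g) ≤ ∫ z, ‖z.1 - z.2‖ ∂(π.map (Prod.map f g)) :=
        W1_le_integral (hπ.map_prodMap hf hg)
    _ = ∫ z, ‖f z.1 - g z.2‖ ∂π :=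
        integral_map hfg.aemeasurable
          (measurable_fst.sub measurable_snd).norm.aestronglyMeasurable

theorem toReal_sub_le_tvDist {μ ν : Measure α} [IsFiniteMeasure μ] [IsFiniteMeasure ν]
    {A : Set α} (hA : MeasurableSet A) : (μ A).toReal - (ν A).toReal ≤ tvDist μ ν := by
  refine (le_abs_self _).trans (le_ciSup (f := fun B : {B : Set α // MeasurableSet B} =>
    |(μ B.1).toReal - (ν B.1).toReal|) ⟨(μ univ).toReal + (ν univ).toReal, ?_⟩ ⟨A, hA⟩)
  rintro _ ⟨B, rfl⟩
  have hμ := ENNReal.toReal_mono (measure_ne_top μ univ) (measure_mono (subset_univ B.1))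
  have hν := ENNReal.toReal_mono (measure_ne_top ν univ) (measure_mono (subset_univ B.1))
  have := (μ B.1).toReal_nonneg
  have := (ν B.1).toReal_nonneg
  exact abs_le.2 ⟨by linarith, by linarith⟩

theorem exists_common_part (μ ν : Measure α) [IsProbabilityMeasure μ] [IsProbabilityMeasure ν] :
    ∃ ρ μ' ν' : Measure α, μ = μ' + ρ ∧ ν = ν' + ρ ∧ μ' univ = ν' univ ∧
      (μ' univ).toReal ≤ tvDist μ ν := by
  obtain ⟨S, hS, hνμ, hμν⟩ := hahn_decomposition μ ν
  have hS_le : ν.restrict S ≤ μ.restrict S := Measure.le_iff.2 fun A hA => by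
    simp only [Measure.restrict_apply hA]
    exact hνμ _ (hA.inter hS) inter_subset_right
  have hSc_le : μ.restrict Sᶜ ≤ ν.restrict Sᶜ := Measure.le_iff.2 fun A hA => by
    simp only [Measure.restrict_apply hA]
    exact hμν _ (hA.inter hS.compl) inter_subset_right
  set ρ := ν.restrict S + μ.restrict Sᶜ
  have hμ : μ = (μ.restrict S - ν.restrict S) + ρ := by
    rw [← add_assoc, Measure.sub_add_cancel_of_le hS_le, Measure.restrict_add_restrict_compl hS]
  have hν : ν = (ν.restrict Sᶜ - μ.restrict Sᶜ) + ρ := by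
    rw [add_left_comm, Measure.sub_add_cancel_of_le hSc_le,
      Measure.restrict_add_restrict_compl hS]
  refine ⟨ρ, _, _, hμ, hν, ?_, ?_⟩
  · refine (ENNReal.add_left_inj (measure_ne_top ρ univ)).1 ?_
    rw [← Measure.add_apply, ← Measure.add_apply, ← hμ, ← hν, measure_univ, measure_univ]
  · rw [Measure.sub_apply MeasurableSet.univ hS_le, Measure.restrict_apply_univ,
      Measure.restrict_apply_univ, ENNReal.toReal_sub_of_le (hνμ S hS subset_rfl)
      (measure_ne_top μ S)]
    exact toReal_sub_le_tvDist hS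

theorem inv_measure_univ_mul_smul_self (μ : Measure α) [IsFiniteMeasure μ] :
    ((μ univ)⁻¹ * μ univ) • μ = μ := by
  by_cases h : μ univ = 0
  · simp [Measure.measure_univ_eq_zero.1 h]
  · rw [ENNReal.inv_mul_cancel h (measure_ne_top μ univ), one_smul]

/-- The maximal coupling of `μ' + ρ` and `ν' + ρ` when `ρ` is their common part. -/
def gluedCoupling (ρ μ' ν' : Measure α) : Measure (α × α) :=
  ρ.map (fun x => (x, x)) + (μ' univ)⁻¹ • μ'.prod ν'

section Glued

variable {ρ μ' ν' : Measure α} [IsFiniteMeasure μ'] [IsFiniteMeasure ν']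

theorem gluedCoupling_prod_apply_univ (hm : μ' univ = ν' univ) :
    ((μ' univ)⁻¹ • μ'.prod ν') univ = μ' univ := by
  rw [Measure.smul_apply, ← univ_prod_univ, Measure.prod_prod, ← hm, smul_eq_mul, ← mul_assoc,
    ← smul_eq_mul, ← Measure.smul_apply, inv_measure_univ_mul_smul_self]

theorem isCoupling_gluedCoupling (hm : μ' univ = ν' univ) :
    IsCoupling (gluedCoupling ρ μ' ν') (μ' + ρ) (ν' + ρ) := by
  have hdiag : Measurable fun x : α => (x, x) := measurable_id.prodMk measurable_id
  constructor
  · rw [gluedCoupling, Measure.map_add _ _ measurable_fst, Measure.map_map measurable_fst hdiag,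
      Measure.map_smul, Measure.map_fst_prod, smul_smul, ← hm, inv_measure_univ_mul_smul_self,
      add_comm]
    exact congrArg (μ' + ·) Measure.map_id
  · rw [gluedCoupling, Measure.map_add _ _ measurable_snd, Measure.map_map measurable_snd hdiag,
      Measure.map_smul, Measure.map_snd_prod, smul_smul, hm, inv_measure_univ_mul_smul_self,
      add_comm]
    exact congrArg (ν' + ·) Measure.map_id

theorem integral_gluedCoupling_le [IsFiniteMeasure ρ] (hm : μ' univ = ν' univ)
    {c : α × α → ℝ} (hc : Measurable c) {a b : ℝ}
    (hdiag : ∀ᵐ x ∂ρ, ‖c (x, x)‖ ≤ a) (hoff : ∀ᵐ x ∂μ', ∀ᵐ y ∂ν', ‖c (x, y)‖ ≤ b) :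
    ∫ z, c z ∂(gluedCoupling ρ μ' ν') ≤ a * ρ.real univ + b * μ'.real univ := by
  have hmeas : Measurable fun x : α => (x, x) := measurable_id.prodMk measurable_id
  have hsub : ∀ C : ℝ, MeasurableSet {z | ‖c z‖ ≤ C} := fun C =>
    measurableSet_le hc.norm measurable_const
  set π₁ := ρ.map (fun x => (x, x))
  set π₂ := (μ' univ)⁻¹ • μ'.prod ν'
  have : IsFiniteMeasure π₂ :=
    ⟨by rw [gluedCoupling_prod_apply_univ hm]; exact measure_lt_top μ' univ⟩
  have h₁ : ∀ᵐ z ∂π₁, ‖c z‖ ≤ a := (ae_map_iff hmeas.aemeasurable (hsub a)).2 hdiag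
  have h₂ : ∀ᵐ z ∂π₂, ‖c z‖ ≤ b :=
    Measure.ae_smul_measure ((Measure.ae_prod_iff_ae_ae (hsub b)).2 hoff) _
  have hπ₁ : π₁.real univ = ρ.real univ := by
    simp only [π₁, measureReal_def, Measure.map_apply hmeas MeasurableSet.univ, preimage_univ]
  have hπ₂ : π₂.real univ = μ'.real univ := by
    simp only [π₂, measureReal_def, gluedCoupling_prod_apply_univ hm]
  rw [gluedCoupling, integral_add_measure
    ((integrable_const a).mono' hc.aestronglyMeasurable h₁)
    ((integrable_const b).mono' hc.aestronglyMeasurable h₂), ← hπ₁, ← hπ₂]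
  exact add_le_add ((Real.le_norm_self _).trans (norm_integral_le_of_norm_le_const h₁))
    ((Real.le_norm_self _).trans (norm_integral_le_of_norm_le_const h₂))

end Glued

theorem W1_map_le_of_ae_norm_sub_le [BorelSpace E] [SecondCountableTopology E]
    {μ ν : Measure α} [IsProbabilityMeasure μ] [IsProbabilityMeasure ν] {f g : α → E}
    (hf : Measurable f) (hg : Measurable g) {a b : ℝ} (hb : 0 ≤ b)
    (hnear : ∀ᵐ x ∂ν, ‖f x - g x‖ ≤ a) (hfar : ∀ᵐ x ∂μ, ∀ᵐ y ∂ν, ‖f x - g y‖ ≤ b) :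
    W1 (μ.map f) (ν.map g) ≤ b * tvDist μ ν + a := by
  obtain ⟨ρ, μ', ν', rfl, rfl, hm, htv⟩ := exists_common_part μ ν
  have := isFiniteMeasure_of_le (μ' + ρ) (Measure.le_add_right le_rfl : μ' ≤ μ' + ρ)
  have := isFiniteMeasure_of_le (ν' + ρ) (Measure.le_add_right le_rfl : ν' ≤ ν' + ρ)
  have := isFiniteMeasure_of_le (ν' + ρ) (Measure.le_add_left le_rfl : ρ ≤ ν' + ρ)
  have ha : 0 ≤ a := let ⟨_, hx⟩ := hnear.exists; (norm_nonneg _).trans hx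
  have hρ : ρ.real univ ≤ 1 :=
    (probReal_univ (μ := ν' + ρ)) ▸ ENNReal.toReal_mono (measure_ne_top _ univ)
      (Measure.le_add_left le_rfl univ)
  have hπ := isCoupling_gluedCoupling (ρ := ρ) hm
  have := hπ.isProbabilityMeasure
  calc W1 ((μ' + ρ).map f) ((ν' + ρ).map g)
      ≤ ∫ z, ‖f z.1 - g z.2‖ ∂(gluedCoupling ρ μ' ν') := W1_map_le_integral hπ hf hg
    _ ≤ a * ρ.real univ + b * μ'.real univ :=
        integral_gluedCoupling_le hm ((hf.comp measurable_fst).sub (hg.comp measurable_snd)).norm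
          ((ae_add_measure_iff.1 hnear).2.mono fun x hx => (norm_norm _).trans_le hx)
          ((ae_add_measure_iff.1 hfar).1.mono fun x hx =>
            (ae_add_measure_iff.1 hx).1.mono fun y hy => (norm_norm _).trans_le hy)
    _ ≤ a * 1 + b * tvDist (μ' + ρ) (ν' + ρ) := by gcongr; exact htv
    _ = b * tvDist (μ' + ρ) (ν' + ρ) + a := by ring

end Coupling

section EulerStep

variable {E : Type*} [NormedAddCommGroup E] [NormedSpace ℝ E]

theorem norm_eulerStep_sub_le {F G : E → ℝ → E} {x : ℝ → E} {t Δt L0 L1 L2 ε : ℝ}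
    (hΔt : 0 ≤ Δt) (hL0 : 0 ≤ L0) (hL2 : 0 ≤ L2)
    (hLip : ∀ y y', ∀ s ∈ Icc t (t + Δt), ‖F y s - F y' s‖ ≤ L2 * ‖y - y'‖)
    (hTime : ∀ y, ∀ s ∈ Icc t (t + Δt), ∀ s' ∈ Icc t (t + Δt),
      ‖F y s - F y s'‖ ≤ L0 * |s - s'|)
    (hBdd : ∀ y, ∀ s ∈ Icc t (t + Δt), ‖F y s‖ ≤ L1)
    (hApprox : ∀ y, ∀ s ∈ Icc t (t + Δt), ‖F y s - G y s‖ ≤ ε)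
    (hx : ∀ s ∈ Icc t (t + Δt), HasDerivWithinAt x (-G (x s) s) (Icc t (t + Δt)) s) :
    ‖x (t + Δt) + Δt • F (x (t + Δt)) (t + Δt) - x t‖
      ≤ (L2 * (L1 + ε) * Δt + L0 * Δt + ε) * Δt := by
  set b := t + Δt
  have ht : t ∈ Icc t b := left_mem_Icc.2 (by linarith)
  have hb : b ∈ Icc t b := right_mem_Icc.2 (by linarith)
  have hdist : ∀ s ∈ Icc t b, |b - s| ≤ Δt := fun s hs => by
    rw [abs_le]; constructor <;> linarith [hs.1, hs.2]
  have hG : ∀ y, ∀ s ∈ Icc t b, ‖G y s‖ ≤ L1 + ε := fun y s hs =>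
    (norm_le_norm_add_norm_sub _ _).trans (add_le_add (hBdd y s hs) (hApprox y s hs))
  have hM : 0 ≤ L1 + ε := (norm_nonneg _).trans (hG (x t) t ht)
  have hdisp : ∀ s ∈ Icc t b, ‖x b - x s‖ ≤ (L1 + ε) * Δt := fun s hs =>
    calc ‖x b - x s‖ ≤ (L1 + ε) * ‖b - s‖ :=
          (convex_Icc t b).norm_image_sub_le_of_norm_hasDerivWithin_le hx
            (fun u hu => (norm_neg _).trans_le (hG _ u hu)) hs hb
      _ ≤ (L1 + ε) * Δt := mul_le_mul_of_nonneg_left (hdist s hs) hM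
  set v := F (x b) b
  have hdrift : ∀ s ∈ Icc t b, ‖v - G (x s) s‖ ≤ L2 * (L1 + ε) * Δt + L0 * Δt + ε :=
    fun s hs =>
    calc ‖v - G (x s) s‖
        ≤ ‖v - F (x s) b‖ + ‖F (x s) b - F (x s) s‖ + ‖F (x s) s - G (x s) s‖ :=
          (norm_sub_le_norm_sub_add_norm_sub _ (F (x s) s) _).trans
            (by gcongr; exact norm_sub_le_norm_sub_add_norm_sub _ _ _)
      _ ≤ L2 * ‖x b - x s‖ + L0 * |b - s| + ε := by
          gcongr
          exacts [hLip _ _ b hb, hTime _ b hb s hs, hApprox _ s hs]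
      _ ≤ L2 * ((L1 + ε) * Δt) + L0 * Δt + ε := by
          gcongr
          exacts [hdisp s hs, hdist s hs]
      _ = L2 * (L1 + ε) * Δt + L0 * Δt + ε := by ring
  -- the increment of `s ↦ x s + (s - b) • v` over `[t, b]` is the one-step error
  have herr : ∀ s ∈ Icc t b, HasDerivWithinAt (fun s => x s + (s - b) • v)
      (v - G (x s) s) (Icc t b) s := fun s hs => by
    have := (hx s hs).add (((hasDerivWithinAt_id s _).sub_const b).smul_const v)
    rwa [one_smul, neg_add_eq_sub] at this
  have hmvt := (convex_Icc t b).norm_image_sub_le_of_norm_hasDerivWithin_le herr hdrift ht hb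
  have hinc : x b + (b - b) • v - (x t + (t - b) • v) = x b + Δt • v - x t := by
    simp only [b]; module
  rwa [hinc, Real.norm_eq_abs, abs_of_nonneg (by linarith : (0:ℝ) ≤ b - t),
    show b - t = Δt by simp only [b]; ring] at hmvt

end EulerStep

theorem ode_error_bound_general (d : ℕ) (t Δt L0 L1 L2 ε B : ℝ)
    (hΔt : 0 < Δt)
    (hL0 : 0 ≤ L0) (hL1 : 0 ≤ L1) (hL2 : 0 ≤ L2) (hε : 0 ≤ ε) (hB : 0 < B)
    (F G : EuclideanSpace ℝ (Fin d) → ℝ → EuclideanSpace ℝ (Fin d))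
    (hLip : ∀ x y : EuclideanSpace ℝ (Fin d), ∀ s ∈ Set.Icc t (t + Δt),
      ‖F x s - F y s‖ ≤ L2 * ‖x - y‖)
    (hTime : ∀ x : EuclideanSpace ℝ (Fin d), ∀ s ∈ Set.Icc t (t + Δt),
      ∀ s' ∈ Set.Icc t (t + Δt), ‖F x s - F x s'‖ ≤ L0 * |s - s'|)
    (hBdd : ∀ x : EuclideanSpace ℝ (Fin d), ∀ s ∈ Set.Icc t (t + Δt), ‖F x s‖ ≤ L1)
    (hApprox : ∀ x : EuclideanSpace ℝ (Fin d), ∀ s ∈ Set.Icc t (t + Δt),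
      ‖F x s - G x s‖ ≤ ε)
    -- the exact backward trajectories and the induced flow map Φ
    (X : EuclideanSpace ℝ (Fin d) → ℝ → EuclideanSpace ℝ (Fin d))
    (hX : ∀ z : EuclideanSpace ℝ (Fin d), ∀ s ∈ Set.Icc t (t + Δt),
      HasDerivWithinAt (X z) (-(G (X z s) s)) (Set.Icc t (t + Δt)) s)
    (hXend : ∀ z : EuclideanSpace ℝ (Fin d), X z (t + Δt) = z)
    (Φ Ψ : EuclideanSpace ℝ (Fin d) → EuclideanSpace ℝ (Fin d))
    (hΦ : ∀ z, Φ z = X z t)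
    (hΨ : ∀ z, Ψ z = z + Δt • F z (t + Δt))
    (hΦm : Measurable Φ) (hΨm : Measurable Ψ)
    -- the true distribution p and the generated distribution q at noise level t+Δt
    (p q : Measure (EuclideanSpace ℝ (Fin d)))
    [IsProbabilityMeasure p] [IsProbabilityMeasure q]
    -- boundedness: supports, exact trajectories from supp p, and images in the ball
    (hΦim : Φ '' msupport p ⊆ Metric.closedBall 0 (B / 2))
    (hΨim : Ψ '' msupport q ⊆ Metric.closedBall 0 (B / 2)) :
    W1 (q.map Ψ) (p.map Φ)
      ≤ B * tvDist q p + Real.exp (L2 * Δt) * (Δt * (L2 * L1 + L0) + ε) * Δt := by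
  have hexp : (L2 * (L1 + ε) * Δt + L0 * Δt + ε) * Δt
      ≤ Real.exp (L2 * Δt) * (Δt * (L2 * L1 + L0) + ε) * Δt := by
    have hgap : 0 ≤ L2 * Δt * (Δt * (L2 * L1 + L0)) := by positivity
    gcongr
    calc L2 * (L1 + ε) * Δt + L0 * Δt + ε ≤ (L2 * Δt + 1) * (Δt * (L2 * L1 + L0) + ε) := by
          nlinarith
      _ ≤ Real.exp (L2 * Δt) * (Δt * (L2 * L1 + L0) + ε) := by
          gcongr
          exact Real.add_one_le_exp _
  have hlocal : ∀ z, ‖Ψ z - Φ z‖ ≤ Real.exp (L2 * Δt) * (Δt * (L2 * L1 + L0) + ε) * Δt := by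
    intro z
    have h := norm_eulerStep_sub_le hΔt.le hL0 hL2 hLip hTime hBdd hApprox (hX z)
    rw [hXend] at h
    rw [hΨ, hΦ]
    exact h.trans hexp
  have hfar : ∀ᵐ x ∂q, ∀ᵐ y ∂p, ‖Ψ x - Φ y‖ ≤ B := by
    filter_upwards [ae_mem_msupport q] with x hx
    filter_upwards [ae_mem_msupport p] with y hy
    calc ‖Ψ x - Φ y‖ ≤ ‖Ψ x‖ + ‖Φ y‖ := norm_sub_le _ _
      _ ≤ B / 2 + B / 2 := add_le_add (mem_closedBall_zero_iff.1 (hΨim ⟨x, hx, rfl⟩))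
          (mem_closedBall_zero_iff.1 (hΦim ⟨y, hy, rfl⟩))
      _ = B := add_halves B
  exact W1_map_le_of_ae_norm_sub_le hΨm hΦm hB.le (ae_of_all _ hlocal) hfar

/-- **ODE error bound.** With `Φ` the exact backward-flow map given by the
trajectories `X z` of `x'(s) = −G(x(s), s)` with terminal condition `z`, and
`Ψ(z) = z + Δt·F(z, t+Δt)` the one-step frozen-drift map, for probability measures
`p` (true) and `q` (generated) at noise level `t+Δt` with all supports, trajectories,
and images inside the ball of radius `B/2`, we have
`W₁(Ψ_*q, Φ_*p) ≤ B·TV(q, p) + e^{L₂Δt}·(Δt(L₂L₁ + L₀) + ε)·Δt`. -/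
theorem ode_error_bound (d : ℕ) (t Δt L0 L1 L2 ε B : ℝ)
    (ht : 0 ≤ t) (hΔt : 0 < Δt)
    (hL0 : 0 ≤ L0) (hL1 : 0 ≤ L1) (hL2 : 0 ≤ L2) (hε : 0 ≤ ε) (hB : 0 < B)
    (F G : EuclideanSpace ℝ (Fin d) → ℝ → EuclideanSpace ℝ (Fin d))
    (hLip : ∀ x y : EuclideanSpace ℝ (Fin d), ∀ s ∈ Set.Icc t (t + Δt),
      ‖F x s - F y s‖ ≤ L2 * ‖x - y‖)
    (hTime : ∀ x : EuclideanSpace ℝ (Fin d), ∀ s ∈ Set.Icc t (t + Δt),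
      ∀ s' ∈ Set.Icc t (t + Δt), ‖F x s - F x s'‖ ≤ L0 * |s - s'|)
    (hBdd : ∀ x : EuclideanSpace ℝ (Fin d), ∀ s ∈ Set.Icc t (t + Δt), ‖F x s‖ ≤ L1)
    (hApprox : ∀ x : EuclideanSpace ℝ (Fin d), ∀ s ∈ Set.Icc t (t + Δt),
      ‖F x s - G x s‖ ≤ ε)
    -- the exact backward trajectories and the induced flow map Φ
    (X : EuclideanSpace ℝ (Fin d) → ℝ → EuclideanSpace ℝ (Fin d))
    (hX : ∀ z : EuclideanSpace ℝ (Fin d), ∀ s ∈ Set.Icc t (t + Δt),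
      HasDerivWithinAt (X z) (-(G (X z s) s)) (Set.Icc t (t + Δt)) s)
    (hXend : ∀ z : EuclideanSpace ℝ (Fin d), X z (t + Δt) = z)
    (Φ Ψ : EuclideanSpace ℝ (Fin d) → EuclideanSpace ℝ (Fin d))
    (hΦ : ∀ z, Φ z = X z t)
    (hΨ : ∀ z, Ψ z = z + Δt • F z (t + Δt))
    (hΦm : Measurable Φ) (hΨm : Measurable Ψ)
    -- the true distribution p and the generated distribution q at noise level t+Δt
    (p q : Measure (EuclideanSpace ℝ (Fin d)))
    [IsProbabilityMeasure p] [IsProbabilityMeasure q]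
    -- boundedness: supports, exact trajectories from supp p, and images in the ball
    (hpsupp : msupport p ⊆ Metric.closedBall 0 (B / 2))
    (hqsupp : msupport q ⊆ Metric.closedBall 0 (B / 2))
    (htraj : ∀ z ∈ msupport p, ∀ s ∈ Set.Icc t (t + Δt), ‖X z s‖ ≤ B / 2)
    (hΦim : Φ '' msupport p ⊆ Metric.closedBall 0 (B / 2))
    (hΨim : Ψ '' msupport q ⊆ Metric.closedBall 0 (B / 2)) :
    W1 (q.map Ψ) (p.map Φ)
      ≤ B * tvDist q p + Real.exp (L2 * Δt) * (Δt * (L2 * L1 + L0) + ε) * Δt :=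
  ode_error_bound_general d t Δt L0 L1 L2 ε B hΔt hL0 hL1 hL2 hε hB F G hLip hTime hBdd hApprox X hX
    hXend Φ Ψ hΦ hΨ hΦm hΨm p q hΦim hΨim
end
end

section
/- Fix d ∈ ℕ, t ≥ 0, Δt > 0, γ ∈ [0, 1) and B > 0. Set σ_γ² = (t+(1+γ)Δt)² − (t+Δt)², φ_γ = N(0, σ_γ²I_d), and λ(γ) = 2Q(B / (2√((t+(1+γ)Δt)² − t²))). Let p and q be Borel probability measures on ℝ^d, and define the ODE gradient-error term E^{ODE} = B·TV(q, p) and the AdaSDE gradient-error term E^{AdaSDE} = B·(1 − λ(γ))·TV(q * φ_γ, p * φ_γ). Then E^{AdaSDE} ≤ E^{ODE}; moreover the inequality is strict whenever γ > 0 and TV(q, p) > 0. -/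
open MeasureTheory

noncomputable section

/-!
Convolving `q` and `p` with the same kernel `φ` contracts total variation by the mass of `φ`:
writing `(μ ∗ φ)(A) = ∫ μ(A - y) dφ(y)`, the integrands for `q` and `p` differ by at most
`TV(q, p)` pointwise. The Gaussian `φ_γ` has mass one (the degenerate variance `σ_γ² = 0` gives
mass at most one), so `TV(q ∗ φ_γ, p ∗ φ_γ) ≤ TV(q, p)`. Since `Q > 0`, the factor `1 - λ(γ)` is
strictly below one, which gives the strict inequality as soon as `TV(q, p) > 0`.
-/

open Set

section TotalVariation

variable {E : Type*} [MeasurableSpace E]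

lemma tvDist_nonneg (μ ν : Measure E) : 0 ≤ tvDist μ ν :=
  Real.iSup_nonneg fun _ => abs_nonneg _

lemma abs_toReal_sub_le_tvDist (μ ν : Measure E) [IsFiniteMeasure μ] [IsFiniteMeasure ν]
    {A : Set E} (hA : MeasurableSet A) : |(μ A).toReal - (ν A).toReal| ≤ tvDist μ ν := by
  refine le_ciSup
    (f := fun B : {A : Set E // MeasurableSet A} => |(μ B.1).toReal - (ν B.1).toReal|)
    ⟨μ.real univ + ν.real univ, ?_⟩ ⟨A, hA⟩
  rintro _ ⟨B, rfl⟩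
  refine (abs_sub _ _).trans (add_le_add ?_ ?_) <;>
    exact (abs_of_nonneg ENNReal.toReal_nonneg).trans_le (measureReal_mono (subset_univ _))

lemma tvDist_le {μ ν : Measure E} {r : ℝ}
    (h : ∀ A, MeasurableSet A → |(μ A).toReal - (ν A).toReal| ≤ r) : tvDist μ ν ≤ r :=
  ciSup_le fun A => h A.1 A.2

variable [AddMonoid E] [MeasurableAdd₂ E]

lemma conv_apply_eq_lintegral (μ φ : Measure E) [SFinite μ] [SFinite φ] {A : Set E}
    (hA : MeasurableSet A) : (μ ∗ φ) A = ∫⁻ y, μ ((· + y) ⁻¹' A) ∂φ := by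
  rw [Measure.conv, Measure.map_apply measurable_add hA,
    Measure.prod_apply_symm (measurable_add hA)]
  rfl

lemma toReal_conv_apply_eq_integral (μ φ : Measure E) [IsFiniteMeasure μ] [IsFiniteMeasure φ]
    {A : Set E} (hA : MeasurableSet A) :
    ((μ ∗ φ) A).toReal = ∫ y, (μ ((· + y) ⁻¹' A)).toReal ∂φ := by
  have hmeas : Measurable fun y => μ ((· + y) ⁻¹' A) :=
    measurable_measure_prodMk_right (measurable_add hA)
  rw [conv_apply_eq_lintegral μ φ hA,
    integral_toReal hmeas.aemeasurable (.of_forall fun _ => measure_lt_top _ _)]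

lemma tvDist_conv_le (μ ν φ : Measure E) [IsFiniteMeasure μ] [IsFiniteMeasure ν]
    [IsFiniteMeasure φ] : tvDist (μ ∗ φ) (ν ∗ φ) ≤ tvDist μ ν * φ.real univ := by
  refine tvDist_le fun A hA => ?_
  have hint : ∀ (ρ : Measure E) [IsFiniteMeasure ρ],
      Integrable (fun y => (ρ ((· + y) ⁻¹' A)).toReal) φ := fun ρ _ =>
    .of_bound
      (measurable_measure_prodMk_right (measurable_add hA)).ennreal_toReal.aestronglyMeasurable
      (ρ.real univ) (.of_forall fun _ => by
        rw [Real.norm_of_nonneg ENNReal.toReal_nonneg]; exact measureReal_mono (subset_univ _))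
  rw [toReal_conv_apply_eq_integral μ φ hA, toReal_conv_apply_eq_integral ν φ hA,
    ← integral_sub (hint μ) (hint ν)]
  exact (Real.norm_eq_abs _).symm.trans_le <| norm_integral_le_of_norm_le_const <|
    .of_forall fun y => (Real.norm_eq_abs _).trans_le <|
      abs_toReal_sub_le_tvDist μ ν (measurable_add_const y hA)

end TotalVariation

lemma gaussQ_pos (r : ℝ) : 0 < gaussQ r :=
  ENNReal.toReal_pos
    (fun h => by simpa using ProbabilityTheory.gaussianReal_absolutelyContinuous' 0 one_ne_zero h)
    (measure_ne_top _ _)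

lemma gaussianE_univ_of_pos (d : ℕ) (m : EuclideanSpace ℝ (Fin d)) {σ2 : ℝ} (hσ : 0 < σ2) :
    gaussianE d m σ2 univ = 1 := by
  have hc : 0 < 2 * Real.pi * σ2 := by positivity
  have hgauss : ∫ x : EuclideanSpace ℝ (Fin d), Real.exp (-(2 * σ2)⁻¹ * ‖x‖ ^ 2)
      = (2 * Real.pi * σ2) ^ ((d : ℝ) / 2) := by
    rw [GaussianFourier.integral_rexp_neg_mul_sq_norm (by positivity), finrank_euclideanSpace_fin]
    congr 1
    field_simp
  have hint : Integrable fun x : EuclideanSpace ℝ (Fin d) => Real.exp (-(2 * σ2)⁻¹ * ‖x‖ ^ 2) :=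
    .of_integral_ne_zero (by rw [hgauss]; positivity)
  calc gaussianE d m σ2 univ
      = ∫⁻ x : EuclideanSpace ℝ (Fin d),
          ENNReal.ofReal ((2 * Real.pi * σ2) ^ (-(d : ℝ) / 2) *
            Real.exp (-(2 * σ2)⁻¹ * ‖x‖ ^ 2)) := by
        rw [gaussianE, withDensity_apply _ MeasurableSet.univ, Measure.restrict_univ,
          lintegral_sub_right_eq_self (fun x => ENNReal.ofReal
            ((2 * Real.pi * σ2) ^ (-(d : ℝ) / 2) * Real.exp (-‖x‖ ^ 2 / (2 * σ2)))) m]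
        simp only [div_eq_inv_mul, neg_mul, mul_neg]
    _ = 1 := by
        rw [← ofReal_integral_eq_lintegral_ofReal (hint.const_mul _)
          (.of_forall fun _ => by positivity), integral_const_mul, hgauss, ← Real.rpow_add hc,
          neg_div, neg_add_cancel, Real.rpow_zero, ENNReal.ofReal_one]

lemma gaussianE_univ_le_one (d : ℕ) (m : EuclideanSpace ℝ (Fin d)) {σ2 : ℝ} (hσ : 0 ≤ σ2) :
    gaussianE d m σ2 univ ≤ 1 := by
  rcases hσ.lt_or_eq with hσ | rfl
  · exact (gaussianE_univ_of_pos d m hσ).le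
  -- For `σ2 = 0` the density is the constant `0 ^ (-d/2) * exp 0` (as `x / 0 = 0`):
  -- it is `1` on the one-point space `ℝ⁰` and `0` in positive dimension.
  rcases d with _ | d
  · simp [gaussianE, volume_euclideanSpace_eq_dirac]
  · have hexp : -((d + 1 : ℕ) : ℝ) / 2 ≠ 0 :=
      div_ne_zero (neg_ne_zero.2 (Nat.cast_ne_zero.2 d.succ_ne_zero)) two_ne_zero
    simp only [gaussianE, mul_zero, Real.zero_rpow hexp, zero_mul, ENNReal.ofReal_zero]
    simp

/-- TV comparison of gradient-error terms, AdaSDE vs. ODE: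
`E^{AdaSDE} = B(1−λ(γ))·TV(q ∗ φ_γ, p ∗ φ_γ) ≤ B·TV(q, p) = E^{ODE}`, with strict
inequality whenever `γ > 0` and `TV(q, p) > 0`. -/
theorem gradient_error_comparison (d : ℕ) (t Δt γ B : ℝ)
    (ht : 0 ≤ t) (hΔt : 0 < Δt) (hγ : γ ∈ Set.Ico (0 : ℝ) 1) (hB : 0 < B)
    (p q : Measure (EuclideanSpace ℝ (Fin d)))
    [IsProbabilityMeasure p] [IsProbabilityMeasure q] :
    B * (1 - 2 * gaussQ (B / (2 * Real.sqrt ((t + (1 + γ) * Δt) ^ 2 - t ^ 2)))) *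
        tvDist (Measure.conv q (gaussianE d 0 ((t + (1 + γ) * Δt) ^ 2 - (t + Δt) ^ 2)))
          (Measure.conv p (gaussianE d 0 ((t + (1 + γ) * Δt) ^ 2 - (t + Δt) ^ 2)))
      ≤ B * tvDist q p ∧
    (0 < γ → 0 < tvDist q p →
      B * (1 - 2 * gaussQ (B / (2 * Real.sqrt ((t + (1 + γ) * Δt) ^ 2 - t ^ 2)))) *
          tvDist (Measure.conv q (gaussianE d 0 ((t + (1 + γ) * Δt) ^ 2 - (t + Δt) ^ 2)))
            (Measure.conv p (gaussianE d 0 ((t + (1 + γ) * Δt) ^ 2 - (t + Δt) ^ 2)))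
        < B * tvDist q p) := by
  set φ := gaussianE d 0 ((t + (1 + γ) * Δt) ^ 2 - (t + Δt) ^ 2)
  have hφ : φ univ ≤ 1 := gaussianE_univ_le_one d 0 (by nlinarith [mul_nonneg hγ.1 hΔt.le])
  have : IsFiniteMeasure φ := ⟨hφ.trans_lt ENNReal.one_lt_top⟩
  have hconv : tvDist (q ∗ φ) (p ∗ φ) ≤ tvDist q p :=
    (tvDist_conv_le q p φ).trans <| mul_le_of_le_one_right (tvDist_nonneg q p) <|
      ENNReal.toReal_le_of_le_ofReal zero_le_one (by simpa using hφ)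
  have hQ := gaussQ_pos (B / (2 * Real.sqrt ((t + (1 + γ) * Δt) ^ 2 - t ^ 2)))
  have hconv_nonneg := tvDist_nonneg (q ∗ φ) (p ∗ φ)
  refine ⟨?_, fun _ hpos => ?_⟩
  · nlinarith [mul_nonneg (mul_nonneg hB.le hQ.le) hconv_nonneg]
  · rcases hconv_nonneg.eq_or_lt with hzero | hconv_pos
    · rw [← hzero, mul_zero]
      positivity
    · nlinarith [mul_pos (mul_pos hB hQ) hconv_pos]
end
end

section
/- Fix d ∈ ℕ, t ≥ 0, Δt > 0, constants L₀, L₁, L₂, ε ≥ 0, and let F, G : ℝ^d × ℝ → ℝ^d satisfy the drift assumptions on [t, t+Δt]. Let x : [t, t+Δt] → ℝ^d be a solution of the exact backward ODE x'(s) = −G(x(s), s), and let x̄ : [t, t+Δt] → ℝ^d be the frozen-drift (single-step) solution x̄'(s) = −F(x̄(t+Δt), t+Δt), i.e., x̄(t) = x̄(t+Δt) + Δt·F(x̄(t+Δt), t+Δt). Then ‖x(t) − x̄(t)‖ ≤ e^{L₂Δt}·(‖x(t+Δt) − x̄(t+Δt)‖ + (Δt·(L₂L₁ + L₀) + ε)·Δt).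 -/
open MeasureTheory

noncomputable section

/-!
The error `e = x − x̄` satisfies `e' = F(x̄(t+Δt), t+Δt) − G(x(s), s)`. Splitting this difference
through `F(x(s), s)`, `F(x̄(s), s)` and `F(x̄(t+Δt), s)` bounds it by `L₂‖e(s)‖ + δ` with
`δ = (L₂L₁ + L₀)Δt + ε`, since `x̄` moves at speed at most `L₁`. Grönwall's inequality, run
backwards in time from `t+Δt`, then gives `‖e(t)‖ ≤ e^{L₂Δt}(‖e(t+Δt)‖ + δΔt)`.
-/

open Set

theorem gronwallBound_le_exp_mul {δ K ε x : ℝ} (hK : 0 ≤ K) (hε : 0 ≤ ε) :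
    gronwallBound δ K ε x ≤ Real.exp (K * x) * (δ + ε * x) := by
  rcases hK.eq_or_lt with rfl | hKpos
  · simp [gronwallBound_K0]
  rw [gronwallBound_of_K_ne_0 hKpos.ne']
  have hexp : Real.exp (K * x) - 1 ≤ K * x * Real.exp (K * x) := by
    have h := mul_le_mul_of_nonneg_left (Real.one_sub_le_exp_neg (K * x)) (Real.exp_pos (K * x)).le
    rw [← Real.exp_add, add_neg_cancel, Real.exp_zero] at h
    linarith
  calc δ * Real.exp (K * x) + ε / K * (Real.exp (K * x) - 1)
      ≤ δ * Real.exp (K * x) + ε / K * (K * x * Real.exp (K * x)) := by gcongr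
    _ = Real.exp (K * x) * (δ + ε * x) := by field_simp

theorem norm_left_le_gronwallBound_of_norm_deriv_le {E : Type*} [NormedAddCommGroup E]
    [NormedSpace ℝ E] {f f' : ℝ → E} {K ε a b : ℝ} (hab : a ≤ b)
    (hf : ∀ s ∈ Icc a b, HasDerivWithinAt f (f' s) (Icc a b) s)
    (bound : ∀ s ∈ Icc a b, ‖f' s‖ ≤ K * ‖f s‖ + ε) :
    ‖f a‖ ≤ gronwallBound ‖f b‖ K ε (b - a) := by
  have hmaps : MapsTo (b - ·) (Icc 0 (b - a)) (Icc a b) := fun u hu =>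
    ⟨by linarith [hu.2], by linarith [hu.1]⟩
  have hrev : ∀ u ∈ Icc 0 (b - a),
      HasDerivWithinAt (fun u => f (b - u)) (-f' (b - u)) (Icc 0 (b - a)) u := fun u hu => by
    simpa [Function.comp_def] using
      (hf _ (hmaps hu)).scomp u ((hasDerivAt_id u).const_sub b).hasDerivWithinAt hmaps
  have := norm_le_gronwallBound_of_norm_deriv_right_le (f := fun u => f (b - u)) (δ := ‖f b‖)
    (fun u hu => (hrev u hu).continuousWithinAt)
    (fun u hu => (hrev u (Ico_subset_Icc_self hu)).mono_of_mem_nhdsWithin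
      (Filter.mem_of_superset (Icc_mem_nhdsGE_of_mem ⟨le_rfl, hu.2⟩) (Icc_subset_Icc_left hu.1)))
    (by simp) (fun u hu => by simpa using bound _ (hmaps (Ico_subset_Icc_self hu)))
    (b - a) ⟨sub_nonneg.2 hab, le_rfl⟩
  simpa using this

theorem norm_sub_le_of_approx_of_lipschitz {E : Type*} [SeminormedAddCommGroup E]
    (F G : E → ℝ → E) {p q r : E} {s s' L₀ L₂ ε : ℝ}
    (hLip : ∀ y z, ‖F y s - F z s‖ ≤ L₂ * ‖y - z‖) (hTime : ‖F r s - F r s'‖ ≤ L₀ * |s - s'|)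
    (hApprox : ‖F p s - G p s‖ ≤ ε) :
    ‖G p s - F r s'‖ ≤ L₂ * ‖p - q‖ + L₂ * ‖q - r‖ + L₀ * |s - s'| + ε := by
  have hsplit : G p s - F r s' =
      (F p s - F q s) + (F q s - F r s) + (F r s - F r s') - (F p s - G p s) := by abel
  rw [hsplit]
  refine (norm_sub_le _ _).trans (add_le_add ((norm_add₃_le).trans ?_) hApprox)
  gcongr <;> apply hLip

theorem ode_discretization_error_general (d : ℕ) (t Δt L0 L1 L2 ε : ℝ)
    (hΔt : 0 < Δt)
    (hL0 : 0 ≤ L0) (hL1 : 0 ≤ L1) (hL2 : 0 ≤ L2) (hε : 0 ≤ ε)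
    (F G : EuclideanSpace ℝ (Fin d) → ℝ → EuclideanSpace ℝ (Fin d))
    (hLip : ∀ x y : EuclideanSpace ℝ (Fin d), ∀ s ∈ Set.Icc t (t + Δt),
      ‖F x s - F y s‖ ≤ L2 * ‖x - y‖)
    (hTime : ∀ x : EuclideanSpace ℝ (Fin d), ∀ s ∈ Set.Icc t (t + Δt),
      ∀ s' ∈ Set.Icc t (t + Δt), ‖F x s - F x s'‖ ≤ L0 * |s - s'|)
    (hBdd : ∀ x : EuclideanSpace ℝ (Fin d), ∀ s ∈ Set.Icc t (t + Δt), ‖F x s‖ ≤ L1)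
    (hApprox : ∀ x : EuclideanSpace ℝ (Fin d), ∀ s ∈ Set.Icc t (t + Δt),
      ‖F x s - G x s‖ ≤ ε)
    (x xb : ℝ → EuclideanSpace ℝ (Fin d))
    (hx : ∀ s ∈ Set.Icc t (t + Δt),
      HasDerivWithinAt x (-(G (x s) s)) (Set.Icc t (t + Δt)) s)
    (hxb : ∀ s ∈ Set.Icc t (t + Δt),
      HasDerivWithinAt xb (-(F (xb (t + Δt)) (t + Δt))) (Set.Icc t (t + Δt)) s) :
    ‖x t - xb t‖ ≤ Real.exp (L2 * Δt) *
      (‖x (t + Δt) - xb (t + Δt)‖ + (Δt * (L2 * L1 + L0) + ε) * Δt) := by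
  have hend : t + Δt ∈ Icc t (t + Δt) := right_mem_Icc.2 (by linarith)
  have hdist : ∀ s ∈ Icc t (t + Δt), |s - (t + Δt)| ≤ Δt := fun s hs =>
    abs_sub_le_iff.2 ⟨by linarith [hs.2], by linarith [hs.1]⟩
  have hxb_near : ∀ s ∈ Icc t (t + Δt), ‖xb s - xb (t + Δt)‖ ≤ L1 * Δt := fun s hs =>
    ((convex_Icc _ _).norm_image_sub_le_of_norm_hasDerivWithin_le hxb
      (fun _ _ => by rw [norm_neg]; exact hBdd _ _ hend) hend hs).trans
      (mul_le_mul_of_nonneg_left (hdist s hs) hL1)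
  have hdrift : ∀ s ∈ Icc t (t + Δt), ‖-G (x s) s - -F (xb (t + Δt)) (t + Δt)‖ ≤
      L2 * ‖(x - xb) s‖ + ((L2 * L1 + L0) * Δt + ε) := fun s hs => by
    rw [neg_sub_neg, norm_sub_rev]
    refine (norm_sub_le_of_approx_of_lipschitz F G (q := xb s) (hLip · · s hs)
      (hTime _ s hs _ hend) (hApprox _ s hs)).trans ?_
    have hLip_part := mul_le_mul_of_nonneg_left (hxb_near s hs) hL2
    have hTime_part := mul_le_mul_of_nonneg_left (hdist s hs) hL0
    simp only [Pi.sub_apply]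
    linarith
  have hgron := norm_left_le_gronwallBound_of_norm_deriv_le (by linarith)
    (fun s hs => (hx s hs).sub (hxb s hs)) hdrift
  rw [add_sub_cancel_left] at hgron
  refine hgron.trans ((gronwallBound_le_exp_mul hL2 (by positivity)).trans_eq ?_)
  simp only [Pi.sub_apply]
  ring

/-- One-step ODE discretization error bound: if `x` solves the exact
backward ODE `x'(s) = −G(x(s), s)` on `[t, t+Δt]` and `x̄` is the frozen-drift solution
`x̄'(s) = −F(x̄(t+Δt), t+Δt)`, then
`‖x(t) − x̄(t)‖ ≤ e^{L₂Δt}·(‖x(t+Δt) − x̄(t+Δt)‖ + (Δt(L₂L₁ + L₀) + ε)Δt)`. -/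
theorem ode_discretization_error (d : ℕ) (t Δt L0 L1 L2 ε : ℝ)
    (ht : 0 ≤ t) (hΔt : 0 < Δt)
    (hL0 : 0 ≤ L0) (hL1 : 0 ≤ L1) (hL2 : 0 ≤ L2) (hε : 0 ≤ ε)
    (F G : EuclideanSpace ℝ (Fin d) → ℝ → EuclideanSpace ℝ (Fin d))
    (hLip : ∀ x y : EuclideanSpace ℝ (Fin d), ∀ s ∈ Set.Icc t (t + Δt),
      ‖F x s - F y s‖ ≤ L2 * ‖x - y‖)
    (hTime : ∀ x : EuclideanSpace ℝ (Fin d), ∀ s ∈ Set.Icc t (t + Δt),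
      ∀ s' ∈ Set.Icc t (t + Δt), ‖F x s - F x s'‖ ≤ L0 * |s - s'|)
    (hBdd : ∀ x : EuclideanSpace ℝ (Fin d), ∀ s ∈ Set.Icc t (t + Δt), ‖F x s‖ ≤ L1)
    (hApprox : ∀ x : EuclideanSpace ℝ (Fin d), ∀ s ∈ Set.Icc t (t + Δt),
      ‖F x s - G x s‖ ≤ ε)
    (x xb : ℝ → EuclideanSpace ℝ (Fin d))
    (hx : ∀ s ∈ Set.Icc t (t + Δt),
      HasDerivWithinAt x (-(G (x s) s)) (Set.Icc t (t + Δt)) s)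
    (hxb : ∀ s ∈ Set.Icc t (t + Δt),
      HasDerivWithinAt xb (-(F (xb (t + Δt)) (t + Δt))) (Set.Icc t (t + Δt)) s) :
    ‖x t - xb t‖ ≤ Real.exp (L2 * Δt) *
      (‖x (t + Δt) - xb (t + Δt)‖ + (Δt * (L2 * L1 + L0) + ε) * Δt) :=
  ode_discretization_error_general d t Δt L0 L1 L2 ε hΔt hL0 hL1 hL2 hε F G hLip hTime hBdd hApprox
    x xb hx hxb
end
end

section
/- Fix d ∈ ℕ, t ≥ 0, Δt > 0, γ ∈ (0, 1), constants L₀, L₁, L₂, ε ≥ 0, and let F, G : ℝ^d × ℝ → ℝ^d satisfy the drift assumptions on [t, t+(1+γ)Δt]. Let z ∈ ℝ^d, let x : [t, t+(1+γ)Δt] → ℝ^d solve the exact backward ODE x'(s) = −G(x(s), s) with x(t+(1+γ)Δt) = z, and let x̂(t) = z + (1+γ)Δt·F(z, t+(1+γ)Δt) be the frozen-drift (single-step) approximation started from the same point z. Then ‖x(t) − x̂(t)‖ ≤ e^{(1+γ)L₂Δt}·(1+γ)·((1+γ)Δt·(L₂L₁ + L₀) + ε)·Δt. -/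
open MeasureTheory

noncomputable section

/-!
Reversing time, `τ ↦ x (T - τ)` (with `T = t + (1+γ)Δt`) solves a forward ODE with drift `G`
and starts at `z`, while the Euler line `τ ↦ z + τ • F z T` has constant slope `F z T`. By the
drift assumptions the slope mismatch at time `τ ≤ h = (1+γ)Δt` is at most `L₂` times the current
error plus `h (L₂L₁ + L₀) + ε`: Lipschitz in space along the error and along the Euler line
(which stays within `h L₁` of `z`), Lipschitz in time, and `ε` for the score error. Grönwall
then bounds the error at `τ = h` by `(e^{L₂h} - 1)/L₂ · (h (L₂L₁ + L₀) + ε) ≤ e^{L₂h} h (…)`.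
-/

open Set Real

lemma Real.exp_sub_one_le_mul_exp (u : ℝ) : exp u - 1 ≤ u * exp u := by
  have h := mul_le_mul_of_nonneg_left (one_sub_le_exp_neg u) (exp_pos u).le
  rw [← exp_add, add_neg_cancel, exp_zero] at h
  linarith

lemma gronwallBound_zero_le {K ε : ℝ} (hK : 0 ≤ K) (hε : 0 ≤ ε) (x : ℝ) :
    gronwallBound 0 K ε x ≤ exp (K * x) * ε * x := by
  rcases hK.eq_or_lt with rfl | hK
  · simp [gronwallBound_K0]
  · simp only [gronwallBound_of_K_ne_0 hK.ne', zero_mul, zero_add]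
    rw [div_mul_eq_mul_div, div_le_iff₀ hK]
    nlinarith [mul_le_mul_of_nonneg_left (exp_sub_one_le_mul_exp (K * x)) hε]

section

variable {E : Type*} [NormedAddCommGroup E] [NormedSpace ℝ E]

theorem norm_sub_euler_step_le {f f' : ℝ → E} {z c : E} {K ε h : ℝ}
    (hK : 0 ≤ K) (hε : 0 ≤ ε) (hh : 0 ≤ h)
    (hf : ∀ τ ∈ Icc 0 h, HasDerivWithinAt f (f' τ) (Icc 0 h) τ) (hf0 : f 0 = z)
    (bound : ∀ τ ∈ Ico 0 h, ‖f' τ - c‖ ≤ K * ‖f τ - (z + τ • c)‖ + ε) :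
    ‖f h - (z + h • c)‖ ≤ exp (K * h) * ε * h := by
  set w : ℝ → E := fun τ ↦ f τ - (z + τ • c)
  have hw : ∀ τ ∈ Icc 0 h, HasDerivWithinAt w (f' τ - c) (Icc 0 h) τ := fun τ hτ ↦ by
    simpa using (hf τ hτ).fun_sub
      (((hasDerivAt_id τ).smul_const c).const_add z).hasDerivWithinAt
  have hw_right : ∀ τ ∈ Ico 0 h, HasDerivWithinAt w (f' τ - c) (Ici τ) τ := fun τ hτ ↦
    (hw τ (Ico_subset_Icc_self hτ)).mono_of_mem_nhdsWithin (Icc_mem_nhdsGE_of_mem hτ)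
  have hw0 : ‖w 0‖ ≤ 0 := by simp [w, hf0]
  calc ‖w h‖ ≤ gronwallBound 0 K ε (h - 0) :=
        norm_le_gronwallBound_of_norm_deriv_right_le (fun τ hτ ↦ (hw τ hτ).continuousWithinAt)
          hw_right hw0 bound h ⟨hh, le_rfl⟩
    _ ≤ exp (K * h) * ε * h := by rw [sub_zero]; exact gronwallBound_zero_le hK hε h

theorem hasDerivWithinAt_comp_const_sub_Icc {x x' : ℝ → E} {a b : ℝ}
    (hx : ∀ s ∈ Icc a b, HasDerivWithinAt x (x' s) (Icc a b) s) :
    ∀ τ ∈ Icc 0 (b - a), HasDerivWithinAt (fun τ ↦ x (b - τ)) (-x' (b - τ)) (Icc 0 (b - a)) τ := by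
  have hmaps : MapsTo (fun τ ↦ b - τ) (Icc 0 (b - a)) (Icc a b) := fun τ ⟨h0, h1⟩ ↦
    ⟨by linarith, by linarith⟩
  intro τ hτ
  simpa [Function.comp_def] using (hx (b - τ) (hmaps hτ)).scomp τ
    ((hasDerivAt_id τ).const_sub b).hasDerivWithinAt hmaps

structure DriftAssumptions (F G : E → ℝ → E) (S : Set ℝ) (L0 L1 L2 ε : ℝ) : Prop where
  lipschitz : ∀ x y, ∀ s ∈ S, ‖F x s - F y s‖ ≤ L2 * ‖x - y‖
  time_lipschitz : ∀ x, ∀ s ∈ S, ∀ s' ∈ S, ‖F x s - F x s'‖ ≤ L0 * |s - s'|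
  bounded : ∀ x, ∀ s ∈ S, ‖F x s‖ ≤ L1
  approx : ∀ x, ∀ s ∈ S, ‖F x s - G x s‖ ≤ ε

theorem DriftAssumptions.norm_sub_frozen_le {F G : E → ℝ → E} {S : Set ℝ} {L0 L1 L2 ε : ℝ}
    (hD : DriftAssumptions F G S L0 L1 L2 ε) (hL2 : 0 ≤ L2) {s T τ : ℝ} (hs : s ∈ S)
    (hT : T ∈ S) (hτ : 0 ≤ τ) (y z : E) :
    ‖G y s - F z T‖ ≤ L2 * ‖y - (z + τ • F z T)‖ + (L2 * L1 * τ + L0 * |s - T| + ε) := by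
  have h_approx : ‖G y s - F y s‖ ≤ ε := norm_sub_rev (F y s) _ ▸ hD.approx y s hs
  have h_line : ‖F (z + τ • F z T) s - F z s‖ ≤ L2 * L1 * τ :=
    calc _ ≤ L2 * ‖τ • F z T‖ := by simpa using hD.lipschitz (z + τ • F z T) z s hs
      _ ≤ L2 * (τ * L1) := by
        rw [norm_smul, Real.norm_of_nonneg hτ]
        gcongr
        exact hD.bounded z T hT
      _ = L2 * L1 * τ := by ring
  calc ‖G y s - F z T‖
      ≤ ‖G y s - F y s‖ + ‖F y s - F (z + τ • F z T) s‖ + ‖F (z + τ • F z T) s - F z s‖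
          + ‖F z s - F z T‖ := by
        refine (norm_sub_le_norm_sub_add_norm_sub _ (F z s) _).trans ?_
        gcongr ?_ + _
        refine (norm_sub_le_norm_sub_add_norm_sub _ (F (z + τ • F z T) s) _).trans ?_
        gcongr ?_ + _
        exact norm_sub_le_norm_sub_add_norm_sub _ _ _
    _ ≤ ε + L2 * ‖y - (z + τ • F z T)‖ + L2 * L1 * τ + L0 * |s - T| := by
        gcongr
        · exact hD.lipschitz _ _ s hs
        · exact hD.time_lipschitz z s hs T hT
    _ = _ := by ring

end

theorem adasde_error_propagation_general (d : ℕ) (t Δt γ L0 L1 L2 ε : ℝ)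
    (hΔt : 0 < Δt) (hγ : γ ∈ Set.Ioo (0 : ℝ) 1)
    (hL0 : 0 ≤ L0) (hL1 : 0 ≤ L1) (hL2 : 0 ≤ L2) (hε : 0 ≤ ε)
    (F G : EuclideanSpace ℝ (Fin d) → ℝ → EuclideanSpace ℝ (Fin d))
    (hLip : ∀ x y : EuclideanSpace ℝ (Fin d), ∀ s ∈ Set.Icc t (t + (1 + γ) * Δt),
      ‖F x s - F y s‖ ≤ L2 * ‖x - y‖)
    (hTime : ∀ x : EuclideanSpace ℝ (Fin d), ∀ s ∈ Set.Icc t (t + (1 + γ) * Δt),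
      ∀ s' ∈ Set.Icc t (t + (1 + γ) * Δt), ‖F x s - F x s'‖ ≤ L0 * |s - s'|)
    (hBdd : ∀ x : EuclideanSpace ℝ (Fin d), ∀ s ∈ Set.Icc t (t + (1 + γ) * Δt),
      ‖F x s‖ ≤ L1)
    (hApprox : ∀ x : EuclideanSpace ℝ (Fin d), ∀ s ∈ Set.Icc t (t + (1 + γ) * Δt),
      ‖F x s - G x s‖ ≤ ε)
    (z : EuclideanSpace ℝ (Fin d)) (x : ℝ → EuclideanSpace ℝ (Fin d))
    (hx : ∀ s ∈ Set.Icc t (t + (1 + γ) * Δt),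
      HasDerivWithinAt x (-(G (x s) s)) (Set.Icc t (t + (1 + γ) * Δt)) s)
    (hxend : x (t + (1 + γ) * Δt) = z) :
    ‖x t - (z + ((1 + γ) * Δt) • F z (t + (1 + γ) * Δt))‖
      ≤ Real.exp ((1 + γ) * L2 * Δt) * (1 + γ) *
          ((1 + γ) * Δt * (L2 * L1 + L0) + ε) * Δt := by
  set h := (1 + γ) * Δt with h_def
  have hh : 0 ≤ h := mul_nonneg (by linarith [hγ.1]) hΔt.le
  have hD : DriftAssumptions F G (Icc t (t + h)) L0 L1 L2 ε := ⟨hLip, hTime, hBdd, hApprox⟩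
  have hT : t + h ∈ Icc t (t + h) := ⟨by linarith, le_rfl⟩
  have hx_rev := hasDerivWithinAt_comp_const_sub_Icc hx
  simp only [add_sub_cancel_left, neg_neg] at hx_rev
  have bound : ∀ τ ∈ Ico 0 h, ‖G (x (t + h - τ)) (t + h - τ) - F z (t + h)‖ ≤
      L2 * ‖x (t + h - τ) - (z + τ • F z (t + h))‖ + (h * (L2 * L1 + L0) + ε) := by
    rintro τ ⟨hτ0, hτh⟩
    have hs : t + h - τ ∈ Icc t (t + h) := ⟨by linarith, by linarith⟩
    have hsT : |t + h - τ - (t + h)| = τ := by simp [abs_of_nonneg hτ0]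
    have := hD.norm_sub_frozen_le hL2 hs hT hτ0 (x (t + h - τ)) z
    rw [hsT] at this
    nlinarith [mul_nonneg hL2 hL1]
  have key := norm_sub_euler_step_le hL2 (by positivity) hh hx_rev (by simpa using hxend) bound
  rw [add_sub_cancel_right] at key
  calc _ ≤ exp (L2 * h) * (h * (L2 * L1 + L0) + ε) * h := key
    _ = _ := by rw [show L2 * h = (1 + γ) * L2 * Δt by ring]; ring

/-- AdaSDE single-step error propagation over the stretched interval
`[t, t+(1+γ)Δt]`: if `x` solves the exact backward ODE with terminal condition
`x(t+(1+γ)Δt) = z` and `x̂(t) = z + (1+γ)Δt·F(z, t+(1+γ)Δt)` is the frozen-drift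
approximation from the same point, then
`‖x(t) − x̂(t)‖ ≤ e^{(1+γ)L₂Δt}·(1+γ)·((1+γ)Δt·(L₂L₁ + L₀) + ε)·Δt`. -/
theorem adasde_error_propagation (d : ℕ) (t Δt γ L0 L1 L2 ε : ℝ)
    (ht : 0 ≤ t) (hΔt : 0 < Δt) (hγ : γ ∈ Set.Ioo (0 : ℝ) 1)
    (hL0 : 0 ≤ L0) (hL1 : 0 ≤ L1) (hL2 : 0 ≤ L2) (hε : 0 ≤ ε)
    (F G : EuclideanSpace ℝ (Fin d) → ℝ → EuclideanSpace ℝ (Fin d))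
    (hLip : ∀ x y : EuclideanSpace ℝ (Fin d), ∀ s ∈ Set.Icc t (t + (1 + γ) * Δt),
      ‖F x s - F y s‖ ≤ L2 * ‖x - y‖)
    (hTime : ∀ x : EuclideanSpace ℝ (Fin d), ∀ s ∈ Set.Icc t (t + (1 + γ) * Δt),
      ∀ s' ∈ Set.Icc t (t + (1 + γ) * Δt), ‖F x s - F x s'‖ ≤ L0 * |s - s'|)
    (hBdd : ∀ x : EuclideanSpace ℝ (Fin d), ∀ s ∈ Set.Icc t (t + (1 + γ) * Δt),
      ‖F x s‖ ≤ L1)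
    (hApprox : ∀ x : EuclideanSpace ℝ (Fin d), ∀ s ∈ Set.Icc t (t + (1 + γ) * Δt),
      ‖F x s - G x s‖ ≤ ε)
    (z : EuclideanSpace ℝ (Fin d)) (x : ℝ → EuclideanSpace ℝ (Fin d))
    (hx : ∀ s ∈ Set.Icc t (t + (1 + γ) * Δt),
      HasDerivWithinAt x (-(G (x s) s)) (Set.Icc t (t + (1 + γ) * Δt)) s)
    (hxend : x (t + (1 + γ) * Δt) = z) :
    ‖x t - (z + ((1 + γ) * Δt) • F z (t + (1 + γ) * Δt))‖
      ≤ Real.exp ((1 + γ) * L2 * Δt) * (1 + γ) *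
          ((1 + γ) * Δt * (L2 * L1 + L0) + ε) * Δt :=
  adasde_error_propagation_general d t Δt γ L0 L1 L2 ε hΔt hγ hL0 hL1 hL2 hε F G hLip hTime hBdd
    hApprox z x hx hxend
end
end

section
/- Let d ∈ ℕ, x, y ∈ ℝ^d and σ > 0. Then the total variation distance between the two isotropic Gaussian measures with common covariance σ²I_d and means x and y satisfies TV(N(x, σ²I_d), N(y, σ²I_d)) = 1 − 2Q(‖x − y‖ / (2σ)). -/
open MeasureTheory

noncomputable section

/-!
On the half-space `S = {z | ‖z - x‖ ≤ ‖z - y‖}` the density of `N(x, σ²I)` dominates that of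
`N(y, σ²I)`, and on its complement the reverse holds, so `S` is a Hahn set for the difference of
the two measures and the total variation distance is `N(x, σ²I)(S) - N(y, σ²I)(S)`. Writing
`N(m, σ²I)` as the image of the standard Gaussian under `z ↦ m + σ z`, the coordinate
`⟪x - y, z⟫` is a one-dimensional Gaussian, and `S` is where it exceeds the value at the midpoint
of `x` and `y`; standardizing gives `Q(-‖x - y‖/(2σ)) - Q(‖x - y‖/(2σ)) = 1 - 2 Q(‖x - y‖/(2σ))`.
-/

open Set ProbabilityTheory
open scoped RealInnerProductSpace NNReal ENNReal

namespace MeasureTheory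

theorem lintegral_fin_nat_prod_eq_prod {n : ℕ} {E : Fin n → Type*}
    {mE : ∀ i, MeasurableSpace (E i)} {μ : (i : Fin n) → Measure (E i)} [∀ i, SigmaFinite (μ i)]
    {f : (i : Fin n) → E i → ℝ≥0∞} (hf : ∀ i, Measurable (f i)) :
    ∫⁻ x, ∏ i, f i (x i) ∂(Measure.pi μ) = ∏ i, ∫⁻ x, f i x ∂(μ i) := by
  induction n with
  | zero => simp
  | succ n ih =>
      calc
        _ = ∫⁻ x : E 0 × ((i : Fin n) → E (Fin.succ i)),
            f 0 x.1 * ∏ i : Fin n, f (Fin.succ i) (x.2 i)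
            ∂((μ 0).prod (Measure.pi (fun i ↦ μ i.succ))) := by
          have hm : Measurable fun x : (i : Fin (n + 1)) → E i ↦ ∏ i, f i (x i) :=
            Finset.measurable_prod _ fun i _ ↦ (hf i).comp (measurable_pi_apply i)
          rw [← ((measurePreserving_piFinSuccAbove μ 0).symm).lintegral_comp hm]
          simp only [Fin.prod_univ_succ]
          rfl
        _ = (∫⁻ x, f 0 x ∂μ 0) * ∏ i : Fin n, ∫⁻ x, f i.succ x ∂(μ i.succ) := by
          have hm : Measurable fun y : (i : Fin n) → E i.succ ↦ ∏ i, f i.succ (y i) :=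
            Finset.measurable_prod _ fun i _ ↦ (hf i.succ).comp (measurable_pi_apply i)
          rw [← ih fun i ↦ hf i.succ, ← lintegral_prod_mul (f := f 0) (hf 0).aemeasurable
            hm.aemeasurable]
        _ = ∏ i, ∫⁻ x, f i x ∂(μ i) := by rw [Fin.prod_univ_succ]

theorem lintegral_fintype_prod_eq_prod {ι : Type*} [Fintype ι] {E : ι → Type*}
    {mE : ∀ i, MeasurableSpace (E i)} {μ : (i : ι) → Measure (E i)} [∀ i, SigmaFinite (μ i)]
    {f : (i : ι) → E i → ℝ≥0∞} (hf : ∀ i, Measurable (f i)) :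
    ∫⁻ x, ∏ i, f i (x i) ∂(Measure.pi μ) = ∏ i, ∫⁻ x, f i x ∂(μ i) := by
  let e := (Fintype.equivFin ι).symm
  have hm : Measurable fun x : (i : ι) → E i ↦ ∏ i, f i (x i) :=
    Finset.measurable_prod _ fun i _ ↦ (hf i).comp (measurable_pi_apply i)
  rw [← (measurePreserving_piCongrLeft μ e).lintegral_comp hm]
  simp_rw [← e.prod_comp, MeasurableEquiv.coe_piCongrLeft, Equiv.piCongrLeft_apply_apply]
  exact lintegral_fin_nat_prod_eq_prod fun i ↦ hf (e i)

theorem Measure.pi_withDensity {ι : Type*} [Fintype ι] {E : ι → Type*}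
    {mE : ∀ i, MeasurableSpace (E i)} {μ : (i : ι) → Measure (E i)} [∀ i, SigmaFinite (μ i)]
    {f : (i : ι) → E i → ℝ≥0∞} (hf : ∀ i, Measurable (f i))
    [∀ i, SigmaFinite ((μ i).withDensity (f i))] :
    Measure.pi (fun i ↦ (μ i).withDensity (f i))
      = (Measure.pi μ).withDensity fun x ↦ ∏ i, f i (x i) := by
  refine Measure.pi_eq fun s hs ↦ ?_
  rw [withDensity_apply _ (.univ_pi hs), ← lintegral_indicator (.univ_pi hs)]
  have : (univ.pi s).indicator (fun x ↦ ∏ i, f i (x i))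
      = fun x ↦ ∏ i, (s i).indicator (f i) (x i) := by
    ext x
    classical simp [indicator, Finset.prod_ite_zero]
  rw [this, lintegral_fintype_prod_eq_prod fun i ↦ (hf i).indicator (hs i)]
  simp_rw [lintegral_indicator (hs _), withDensity_apply _ (hs _)]

end MeasureTheory

lemma tvDist_eq_measureReal_sub {E : Type*} [MeasurableSpace E] {μ ν : Measure E}
    [IsProbabilityMeasure μ] [IsProbabilityMeasure ν] {S : Set E} (hS : MeasurableSet S)
    (hle : ν.restrict S ≤ μ.restrict S) (hge : μ.restrict Sᶜ ≤ ν.restrict Sᶜ) :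
    tvDist μ ν = μ.real S - ν.real S := by
  have mono {ρ ρ' : Measure E} [IsFiniteMeasure ρ'] {T A : Set E} (h : ρ.restrict T ≤ ρ'.restrict T)
      (hA : MeasurableSet A) (hAT : A ⊆ T) : ρ.real A ≤ ρ'.real A := by
    have := Measure.le_iff.1 h A hA
    rw [Measure.restrict_apply hA, Measure.restrict_apply hA, inter_eq_left.2 hAT] at this
    exact ENNReal.toReal_mono (measure_ne_top _ _) this
  have hbound (A : Set E) (hA : MeasurableSet A) :
      |μ.real A - ν.real A| ≤ μ.real S - ν.real S := by
    have hSc : Sᶜ ∩ A = A \ S := by rw [inter_comm, sdiff_eq]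
    have hμA := measureReal_inter_add_sdiff (μ := μ) (s := A) hS
    have hνA := measureReal_inter_add_sdiff (μ := ν) (s := A) hS
    have hμS := measureReal_inter_add_sdiff (μ := μ) (s := S) hA
    have hνS := measureReal_inter_add_sdiff (μ := ν) (s := S) hA
    have hμSc := measureReal_inter_add_sdiff (μ := μ) (s := Sᶜ) hA
    have hνSc := measureReal_inter_add_sdiff (μ := ν) (s := Sᶜ) hA
    rw [probReal_compl_eq_one_sub hS, hSc] at hμSc hνSc
    rw [inter_comm] at hμS hνS
    have hA_inter_S := mono hle (hA.inter hS) inter_subset_right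
    have hS_diff_A := mono hle (hS.diff hA) sdiff_subset
    have hA_diff_S := mono hge (hA.diff hS) fun _ h ↦ h.2
    have hSc_diff_A := mono hge (hS.compl.diff hA) sdiff_subset
    rw [abs_le]
    constructor <;> linarith
  have : Nonempty {A : Set E // MeasurableSet A} := ⟨⟨∅, .empty⟩⟩
  refine le_antisymm (ciSup_le fun A ↦ hbound A.1 A.2) ?_
  exact le_ciSup_of_le ⟨_, forall_mem_range.2 fun A ↦ hbound A.1 A.2⟩ ⟨S, hS⟩ (le_abs_self _)

lemma norm_sub_le_norm_sub_iff {E : Type*} [NormedAddCommGroup E] [InnerProductSpace ℝ E]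
    (x y z : E) : ‖z - x‖ ≤ ‖z - y‖ ↔ (‖x‖ ^ 2 - ‖y‖ ^ 2) / 2 ≤ ⟪x - y, z⟫ := by
  rw [← sq_le_sq₀ (norm_nonneg _) (norm_nonneg _), norm_sub_sq_real, norm_sub_sq_real,
    inner_sub_left, real_inner_comm x, real_inner_comm y]
  constructor <;> intro h <;> linarith

lemma gaussianReal_eq_map_affine (m σ : ℝ) :
    gaussianReal m (σ ^ 2).toNNReal = (gaussianReal 0 1).map fun t ↦ m + σ * t := by
  change _ = (gaussianReal 0 1).map ((m + ·) ∘ (σ * ·))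
  rw [← Measure.map_map (measurable_const_add m) (measurable_const_mul σ),
    gaussianReal_map_const_mul, gaussianReal_map_const_add]
  congr 1
  · simp
  · ext; simp [sq_nonneg]

lemma gaussQ_neg (a : ℝ) : gaussQ (-a) = 1 - gaussQ a := by
  have : NullSingletonClass (gaussianReal 0 1) := nullSingletonClass_gaussianReal one_ne_zero
  have hsymm : (gaussianReal 0 1).map (fun t ↦ -t) = gaussianReal 0 1 := by
    simpa using gaussianReal_map_neg (μ := 0) (v := 1)
  have hIic : (gaussianReal 0 1).real (Ici (-a)) = (gaussianReal 0 1).real (Iic a) := by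
    conv_lhs => rw [← hsymm, map_measureReal_apply measurable_neg measurableSet_Ici]
    congr 1
    ext t
    simp only [mem_preimage, mem_Ici, mem_Iic, neg_le_neg_iff]
  rw [gaussQ, gaussQ, ← measureReal_def, ← measureReal_def, hIic, ← compl_Ioi,
    probReal_compl_eq_one_sub measurableSet_Ioi, measureReal_congr Ioi_ae_eq_Ici]

lemma gaussQ_zero : gaussQ 0 = 1 / 2 := by
  linarith [neg_zero (G := ℝ) ▸ gaussQ_neg 0]

lemma stdGaussian_map_inner {E : Type*} [NormedAddCommGroup E] [InnerProductSpace ℝ E]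
    [FiniteDimensional ℝ E] [MeasurableSpace E] [BorelSpace E] {u : E} (hu : ‖u‖ = 1) :
    (stdGaussian E).map (fun z ↦ ⟪u, z⟫) = gaussianReal 0 1 := by
  have h := IsGaussian.map_eq_gaussianReal (μ := stdGaussian E) (innerSL ℝ u)
  rw [integral_strongDual_stdGaussian, variance_dual_stdGaussian, innerSL_apply_norm, hu] at h
  simpa using h

lemma prod_gaussianPDFReal_eq {ι : Type*} [Fintype ι] (m x : EuclideanSpace ℝ ι) (v : ℝ≥0) :
    ∏ i, gaussianPDFReal (m i) v (x i)
      = (2 * Real.pi * v) ^ (-(Fintype.card ι : ℝ) / 2) * Real.exp (-‖x - m‖ ^ 2 / (2 * v)) := by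
  have h2πv : (0 : ℝ) ≤ 2 * Real.pi * v := by positivity
  simp only [gaussianPDFReal, Finset.prod_mul_distrib, Finset.prod_const, ← Real.exp_sum,
    EuclideanSpace.real_norm_sq_eq, ← Finset.sum_div, Finset.sum_neg_distrib, Finset.card_univ,
    PiLp.sub_apply]
  rw [Real.sqrt_eq_rpow, ← Real.rpow_neg h2πv, ← Real.rpow_mul_natCast h2πv]
  ring_nf

lemma gaussianE_eq_map_pi (d : ℕ) (m : EuclideanSpace ℝ (Fin d)) {v : ℝ≥0} (hv : v ≠ 0) :
    gaussianE d m v = (Measure.pi fun i ↦ gaussianReal (m i) v).map (WithLp.toLp 2) := by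
  have (i : Fin d) : SigmaFinite (volume.withDensity (gaussianPDF (m i) v)) := by
    rw [← gaussianReal_of_var_ne_zero _ hv]; infer_instance
  simp_rw [gaussianReal_of_var_ne_zero _ hv]
  rw [Measure.pi_withDensity fun i ↦ measurable_gaussianPDF _ _]
  ext s hs
  rw [Measure.map_apply (by fun_prop) hs, withDensity_apply _ (by measurability),
    gaussianE, withDensity_apply _ hs,
    ← (PiLp.volume_preserving_toLp (Fin d)).setLIntegral_comp_preimage_emb
      (MeasurableEquiv.toLp 2 (Fin d → ℝ)).measurableEmbedding]
  refine setLIntegral_congr_fun (by measurability) fun w _ ↦ ?_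
  have h := prod_gaussianPDFReal_eq m (WithLp.toLp 2 w) v
  rw [Fintype.card_fin] at h
  rw [← h, ENNReal.ofReal_prod_of_nonneg fun i _ ↦ gaussianPDFReal_nonneg _ _ _]
  simp [gaussianPDF]

lemma gaussianE_eq_map_stdGaussian (d : ℕ) (m : EuclideanSpace ℝ (Fin d)) {σ : ℝ} (hσ : σ ≠ 0) :
    gaussianE d m (σ ^ 2)
      = (stdGaussian (EuclideanSpace ℝ (Fin d))).map fun z ↦ m + σ • z := by
  have hv : (σ ^ 2).toNNReal ≠ 0 := by positivity
  rw [← Real.coe_toNNReal _ (sq_nonneg σ), gaussianE_eq_map_pi d m hv]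
  simp_rw [gaussianReal_eq_map_affine]
  rw [← Measure.pi_map_pi fun i ↦ by fun_prop, ← map_pi_eq_stdGaussian,
    Measure.map_map (by fun_prop) (by fun_prop), Measure.map_map (by fun_prop) (by fun_prop)]
  rfl

lemma isProbabilityMeasure_gaussianE (d : ℕ) (m : EuclideanSpace ℝ (Fin d)) {σ : ℝ}
    (hσ : σ ≠ 0) : IsProbabilityMeasure (gaussianE d m (σ ^ 2)) := by
  rw [gaussianE_eq_map_stdGaussian d m hσ]
  exact Measure.isProbabilityMeasure_map (by fun_prop)

lemma gaussianE_restrict_mono (d : ℕ) {m m' : EuclideanSpace ℝ (Fin d)} {σ2 : ℝ} (hσ2 : 0 ≤ σ2)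
    {S : Set (EuclideanSpace ℝ (Fin d))} (hS : MeasurableSet S)
    (h : ∀ z ∈ S, ‖z - m‖ ≤ ‖z - m'‖) :
    (gaussianE d m' σ2).restrict S ≤ (gaussianE d m σ2).restrict S := by
  rw [gaussianE, gaussianE, restrict_withDensity hS, restrict_withDensity hS]
  refine withDensity_mono ((ae_restrict_iff' hS).2 (ae_of_all _ fun z hz ↦ ?_))
  dsimp only
  gcongr
  exact h z hz

lemma measureReal_gaussianE_halfspace (d : ℕ) (m : EuclideanSpace ℝ (Fin d)) {σ : ℝ}
    (hσ : 0 < σ) {w : EuclideanSpace ℝ (Fin d)} (hw : w ≠ 0) (c : ℝ) :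
    (gaussianE d m (σ ^ 2)).real {z | c ≤ ⟪w, z⟫} = gaussQ ((c - ⟪w, m⟫) / (σ * ‖w‖)) := by
  have hw' : 0 < ‖w‖ := norm_pos_iff.2 hw
  have hset : (fun z ↦ m + σ • z) ⁻¹' {z | c ≤ ⟪w, z⟫}
      = (fun z ↦ ⟪‖w‖⁻¹ • w, z⟫) ⁻¹' Ici ((c - ⟪w, m⟫) / (σ * ‖w‖)) := by
    ext z
    simp only [mem_preimage, mem_ofPred_eq, mem_Ici, inner_add_right, inner_smul_right,
      inner_smul_left, RCLike.conj_to_real]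
    rw [div_le_iff₀ (by positivity)]
    constructor <;> intro h <;> field_simp at h ⊢ <;> linarith
  rw [gaussianE_eq_map_stdGaussian d m hσ.ne', map_measureReal_apply (by fun_prop)
    (measurableSet_le measurable_const (by fun_prop)), hset,
    ← map_measureReal_apply (by fun_prop) measurableSet_Ici,
    stdGaussian_map_inner (by simp [norm_smul, hw'.ne'])]
  rfl

/-- Total variation distance between two isotropic Gaussians with common
covariance `σ²I_d` and means `x, y`: `TV = 1 − 2Q(‖x − y‖/(2σ))`. -/
theorem tv_between_gaussians (d : ℕ) (x y : EuclideanSpace ℝ (Fin d)) (σ : ℝ) (hσ : 0 < σ) :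
    tvDist (gaussianE d x (σ ^ 2)) (gaussianE d y (σ ^ 2))
      = 1 - 2 * gaussQ (‖x - y‖ / (2 * σ)) := by
  obtain rfl | hxy := eq_or_ne x y
  · have : Nonempty {A : Set (EuclideanSpace ℝ (Fin d)) // MeasurableSet A} := ⟨⟨∅, .empty⟩⟩
    simp [tvDist, gaussQ_zero]
  have := isProbabilityMeasure_gaussianE d x hσ.ne'
  have := isProbabilityMeasure_gaussianE d y hσ.ne'
  set c := (‖x‖ ^ 2 - ‖y‖ ^ 2) / 2
  have hS : MeasurableSet {z | c ≤ ⟪x - y, z⟫} := measurableSet_le measurable_const (by fun_prop)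
  rw [tvDist_eq_measureReal_sub hS
      (gaussianE_restrict_mono d (sq_nonneg σ) hS fun z hz ↦ (norm_sub_le_norm_sub_iff x y z).2 hz)
      (gaussianE_restrict_mono d (sq_nonneg σ) hS.compl fun z hz ↦
        (lt_of_not_ge (hz ∘ (norm_sub_le_norm_sub_iff x y z).1)).le),
    measureReal_gaussianE_halfspace d x hσ (sub_ne_zero.2 hxy),
    measureReal_gaussianE_halfspace d y hσ (sub_ne_zero.2 hxy)]
  have hr : ‖x - y‖ ^ 2 = ‖x‖ ^ 2 - 2 * ⟪x, y⟫ + ‖y‖ ^ 2 := norm_sub_sq_real x y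
  have hr0 : ‖x - y‖ ≠ 0 := norm_ne_zero_iff.2 (sub_ne_zero.2 hxy)
  have hx : (c - ⟪x - y, x⟫) / (σ * ‖x - y‖) = -(‖x - y‖ / (2 * σ)) := by
    rw [inner_sub_left, real_inner_self_eq_norm_sq, real_inner_comm]
    field_simp
    linear_combination hr
  have hy : (c - ⟪x - y, y⟫) / (σ * ‖x - y‖) = ‖x - y‖ / (2 * σ) := by
    rw [inner_sub_left, real_inner_self_eq_norm_sq]
    field_simp
    linear_combination -hr
  rw [hx, hy, gaussQ_neg]
  ring
end
end

section
/- Let μ ∈ ℝ and σ > 0. Then the total variation distance between the one-dimensional Gaussian measures N(μ, σ²) and N(0, σ²) satisfies TV(N(μ, σ²), N(0, σ²)) = Φ(|μ|/(2σ)) − Φ(−|μ|/(2σ)) = 1 − 2Q(|μ|/(2σ)). -/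
open MeasureTheory

noncomputable section

/-!
Scheffé: the total variation distance of two laws is `μ S - ν S`, where `S` is the set on which
the density of `μ` dominates that of `ν`. Total variation is invariant under measurable
bijections, so rescaling by `±1/σ` reduces to `N(a, 1)` against `N(0, 1)` with `a = |μ|/σ ≥ 0`.
Then `S = [a/2, ∞)`, whose masses are `Φ(a/2)` and `Φ(-a/2)` by the symmetry of `N(0, 1)`.
-/

open ProbabilityTheory Set
open scoped NNReal ENNReal

section TotalVariation

variable {E : Type*} [MeasurableSpace E]

lemma tvDist_map_measurableEquiv {F : Type*} [MeasurableSpace F] (e : E ≃ᵐ F)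
    (μ ν : Measure E) : tvDist (μ.map e) (ν.map e) = tvDist μ ν := by
  let pull : {A : Set F // MeasurableSet A} → {A : Set E // MeasurableSet A} :=
    fun A => ⟨e ⁻¹' A, e.measurable A.2⟩
  have hpull : Function.Surjective pull := fun B =>
    ⟨⟨e.symm ⁻¹' B, e.symm.measurable B.2⟩, Subtype.ext (e.preimage_symm_preimage B)⟩
  unfold tvDist
  rw [← hpull.iSup_comp]
  simp only [pull, e.map_apply]

lemma measureReal_le_of_restrict_le {μ ν : Measure E} [IsFiniteMeasure μ] {S B : Set E}
    (h : ν.restrict S ≤ μ.restrict S) (hB : B ⊆ S) : ν.real B ≤ μ.real B := by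
  have h' := Measure.le_iff'.1 h B
  rw [Measure.restrict_eq_self _ hB, Measure.restrict_eq_self _ hB] at h'
  exact ENNReal.toReal_mono (measure_ne_top μ B) h'

variable {μ ν : Measure E} [IsFiniteMeasure μ] [IsFiniteMeasure ν] {S : Set E}

lemma sub_measureReal_le_of_restrict_le (hS : MeasurableSet S)
    (h_on : ν.restrict S ≤ μ.restrict S) (h_off : μ.restrict Sᶜ ≤ ν.restrict Sᶜ)
    {A : Set E} (hA : MeasurableSet A) : μ.real A - ν.real A ≤ μ.real S - ν.real S := by
  have h_out : μ.real (A \ S) ≤ ν.real (A \ S) :=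
    measureReal_le_of_restrict_le h_off fun _ hx => hx.2
  have h_in : ν.real (S \ A) ≤ μ.real (S \ A) := measureReal_le_of_restrict_le h_on sdiff_subset
  have hμA := measureReal_inter_add_sdiff (μ := μ) (s := A) hS
  have hνA := measureReal_inter_add_sdiff (μ := ν) (s := A) hS
  have hμS := measureReal_inter_add_sdiff (μ := μ) (s := S) hA
  have hνS := measureReal_inter_add_sdiff (μ := ν) (s := S) hA
  rw [inter_comm] at hμS hνS
  linarith

/-- Scheffé's identity. -/
theorem tvDist_eq_of_restrict_le (h_univ : μ univ = ν univ) (hS : MeasurableSet S)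
    (h_on : ν.restrict S ≤ μ.restrict S) (h_off : μ.restrict Sᶜ ≤ ν.restrict Sᶜ) :
    tvDist μ ν = μ.real S - ν.real S := by
  have h_compl : ν.real Sᶜ - μ.real Sᶜ = μ.real S - ν.real S := by
    have : μ.real univ = ν.real univ := congrArg ENNReal.toReal h_univ
    rw [measureReal_compl hS, measureReal_compl hS]
    linarith
  have h_bound (A : {A : Set E // MeasurableSet A}) :
      |μ.real A - ν.real A| ≤ μ.real S - ν.real S := by
    refine abs_le.2 ⟨?_, sub_measureReal_le_of_restrict_le hS h_on h_off A.2⟩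
    have := sub_measureReal_le_of_restrict_le hS.compl h_off
      (by rwa [compl_compl]) A.2
    linarith
  have : Nonempty {A : Set E // MeasurableSet A} := ⟨⟨S, hS⟩⟩
  exact le_antisymm (ciSup_le h_bound)
    (le_ciSup_of_le ⟨_, forall_mem_range.2 h_bound⟩ ⟨S, hS⟩ (le_abs_self _))

lemma withDensity_restrict_mono {ρ : Measure E} {f g : E → ℝ≥0∞} (hS : MeasurableSet S)
    (hfg : ∀ x ∈ S, f x ≤ g x) :
    (ρ.withDensity f).restrict S ≤ (ρ.withDensity g).restrict S := by
  rw [restrict_withDensity hS, restrict_withDensity hS]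
  exact withDensity_mono ((ae_restrict_iff' hS).2 (ae_of_all _ hfg))

end TotalVariation

lemma gaussQ_eq_stdCDF_neg (r : ℝ) : gaussQ r = stdCDF (-r) := by
  have h_neg := gaussianReal_map_neg (μ := 0) (v := 1)
  rw [neg_zero] at h_neg
  rw [gaussQ, stdCDF, ← h_neg, Measure.map_apply measurable_neg measurableSet_Iic]
  congr 2
  ext x
  simp

lemma stdCDF_eq_one_sub_gaussQ (r : ℝ) : stdCDF r = 1 - gaussQ r := by
  have := nullSingletonClass_gaussianReal (μ := 0) one_ne_zero
  rw [stdCDF, gaussQ, ← measureReal_def, ← measureReal_def, ← measureReal_congr Ioi_ae_eq_Ici,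
    ← compl_Iic, measureReal_compl measurableSet_Iic, probReal_univ]
  ring

lemma gaussianReal_one_real_Ici (m t : ℝ) : (gaussianReal m 1).real (Ici t) = gaussQ (t - m) := by
  have h_shift := gaussianReal_map_add_const (μ := 0) (v := 1) m
  rw [zero_add] at h_shift
  rw [gaussQ, ← h_shift, measureReal_def, Measure.map_apply (measurable_add_const m)
    measurableSet_Ici, preimage_add_const_Ici]

lemma gaussianPDF_le_gaussianPDF {m m' x : ℝ} (v : ℝ≥0) (h : (x - m') ^ 2 ≤ (x - m) ^ 2) :
    gaussianPDF m v x ≤ gaussianPDF m' v x := by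
  simp only [gaussianPDF, gaussianPDFReal]
  gcongr

lemma tvDist_gaussianReal_map_const_mul {c : ℝ} (hc : c ≠ 0) (m : ℝ) (v : ℝ≥0) :
    tvDist (gaussianReal (c * m) (.mk (c ^ 2) (sq_nonneg c) * v))
      (gaussianReal 0 (.mk (c ^ 2) (sq_nonneg c) * v)) =
    tvDist (gaussianReal m v) (gaussianReal 0 v) := by
  have h_zero := gaussianReal_map_const_mul (μ := 0) (v := v) c
  rw [mul_zero] at h_zero
  rw [← gaussianReal_map_const_mul, ← h_zero, ← MeasurableEquiv.coe_mulLeft₀ hc,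
    tvDist_map_measurableEquiv]

/-- The two densities cross at `a / 2`, so Scheffé's set is `Ici (a / 2)`. -/
lemma tvDist_gaussianReal_one {a : ℝ} (ha : 0 ≤ a) :
    tvDist (gaussianReal a 1) (gaussianReal 0 1) = stdCDF (a / 2) - stdCDF (-(a / 2)) := by
  have hS : MeasurableSet (Ici (a / 2)) := measurableSet_Ici
  rw [tvDist_eq_of_restrict_le (by simp) hS, gaussianReal_one_real_Ici,
    gaussianReal_one_real_Ici, gaussQ_eq_stdCDF_neg, gaussQ_eq_stdCDF_neg, sub_zero]
  · ring_nf
  · rw [gaussianReal_of_var_ne_zero _ one_ne_zero, gaussianReal_of_var_ne_zero _ one_ne_zero]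
    exact withDensity_restrict_mono hS fun x hx =>
      gaussianPDF_le_gaussianPDF _ (by nlinarith [mem_Ici.1 hx])
  · rw [gaussianReal_of_var_ne_zero _ one_ne_zero, gaussianReal_of_var_ne_zero _ one_ne_zero]
    exact withDensity_restrict_mono hS.compl fun x hx =>
      gaussianPDF_le_gaussianPDF _ (by nlinarith [notMem_Ici.1 hx])

/-- Total variation distance between one-dimensional Gaussians
`N(μ, σ²)` and `N(0, σ²)`: it equals `Φ(|μ|/(2σ)) − Φ(−|μ|/(2σ)) = 1 − 2Q(|μ|/(2σ))`. -/
theorem tv_gaussianReal (μ σ : ℝ) (hσ : 0 < σ) :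
    tvDist (ProbabilityTheory.gaussianReal μ (σ ^ 2).toNNReal)
        (ProbabilityTheory.gaussianReal 0 (σ ^ 2).toNNReal)
      = stdCDF (|μ| / (2 * σ)) - stdCDF (-(|μ| / (2 * σ))) ∧
    tvDist (ProbabilityTheory.gaussianReal μ (σ ^ 2).toNNReal)
        (ProbabilityTheory.gaussianReal 0 (σ ^ 2).toNNReal)
      = 1 - 2 * gaussQ (|μ| / (2 * σ)) := by
  set r := |μ| / (2 * σ)
  obtain ⟨c, hc, hcμ, hc2⟩ : ∃ c : ℝ, c ≠ 0 ∧ c * μ = |μ| / σ ∧ c ^ 2 = σ⁻¹ ^ 2 := by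
    rcases abs_cases μ with ⟨h, -⟩ | ⟨h, -⟩
    · exact ⟨σ⁻¹, by positivity, by rw [h]; ring, rfl⟩
    · exact ⟨-σ⁻¹, by simpa using hσ.ne', by rw [h]; ring, neg_sq _⟩
  have h_var : (.mk (c ^ 2) (sq_nonneg c) : ℝ≥0) * (σ ^ 2).toNNReal = 1 := by
    ext
    simp [hc2, sq_nonneg σ, hσ.ne']
  have h_std : tvDist (gaussianReal μ (σ ^ 2).toNNReal) (gaussianReal 0 (σ ^ 2).toNNReal) =
      stdCDF r - stdCDF (-r) := by
    rw [← tvDist_gaussianReal_map_const_mul hc, h_var, hcμ,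
      tvDist_gaussianReal_one (by positivity), div_div, mul_comm σ]
  refine ⟨h_std, ?_⟩
  rw [h_std, stdCDF_eq_one_sub_gaussQ r, ← gaussQ_eq_stdCDF_neg]
  ring
end
end
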